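/- Define a(n) = n(T_n(2) + 1) where T_n is the Chebyshev polynomial of the first kind. Then the generating function Σ_{n≥1} a(n) x^n is a rational function of x with integer coefficients that is invariant under x ↦ 1/x. -/

import Mathlib

/-!
The values `t n = T_n(2)` satisfy `t (n + 2) = 4 t (n + 1) - t n`, so
`∑ t n xⁿ = (1 - 2x) / (1 - 4x + x²)`; adding `∑ xⁿ = 1 / (1 - x)` and applying `x d/dx`, which
squares the denominator, gives `∑ a n xⁿ = P / Q` with `Q = ((1 - x)(1 - 4x + x²))²` and
`P = 3x - 14x² + 26x³ - 14x⁴ + 3x⁵`. Both are palindromic of degree 6, i.e. `x⁶ P(1/x) = P(x)` and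
`x⁶ Q(1/x) = Q(x)`, so `P / Q` is invariant under `x ↦ 1/x`.
-/

namespace PowerSeries

variable {R : Type*} [CommRing R]

@[simp]
theorem derivative_ofNat (n : ℕ) [n.AtLeastTwo] : d⁄dX R (ofNat(n)) = 0 :=
  Derivation.map_natCast _ n

theorem mk_mul_eq_of_add_two {c : ℕ → R} {p q : R}
    (h : ∀ n, c (n + 2) = p * c (n + 1) - q * c n) :
    mk c * (1 - C p * X + C q * X ^ 2) = C (c 0) + C (c 1 - p * c 0) * X := by
  ext (_ | _ | n) <;> simp [mul_sub, mul_add, ← mul_assoc, coeff_mul_X_pow', h, coeff_mul_C] <;>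
    ring

theorem mk_natCast_mul (c : ℕ → R) : mk (fun n => (n : R) * c n) = X * d⁄dX R (mk c) := by
  ext (_ | n) <;> simp [coeff_derivative, mul_comm]

theorem X_mul_derivative_mul_sq {F P Q : R⟦X⟧} (h : F * Q = P) :
    X * d⁄dX R F * Q ^ 2 = X * (d⁄dX R P * Q - P * d⁄dX R Q) := by
  have hd := congrArg (d⁄dX R) h
  rw [Derivation.leibniz, smul_eq_mul, smul_eq_mul] at hd
  linear_combination (X * Q) * hd - (X * d⁄dX R Q) * h

theorem mk_eval_chebyshevT_mul (y : R) :
    mk (fun n => (Polynomial.Chebyshev.T R n).eval y) * (1 - C (2 * y) * X + X ^ 2) =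
      1 - C y * X := by
  have hrec (n : ℕ) : (Polynomial.Chebyshev.T R ↑(n + 2)).eval y =
      2 * y * (Polynomial.Chebyshev.T R ↑(n + 1)).eval y -
        1 * (Polynomial.Chebyshev.T R n).eval y := by
    push_cast
    rw [Polynomial.Chebyshev.T_add_two]
    simp
  have h := mk_mul_eq_of_add_two (c := fun n => (Polynomial.Chebyshev.T R n).eval y) hrec
  simp only [Nat.cast_zero, Nat.cast_one, Polynomial.Chebyshev.T_zero, Polynomial.Chebyshev.T_one,
    Polynomial.eval_one, Polynomial.eval_X, map_one, one_mul, map_sub, map_mul, map_ofNat] at h ⊢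
  linear_combination h

theorem mk_mobiusLadder_mul :
    mk (fun n => (n : R) * ((Polynomial.Chebyshev.T R n).eval 2 + 1)) *
        ((1 - X) * (1 - 4 * X + X ^ 2)) ^ 2 =
      3 * X - 14 * X ^ 2 + 26 * X ^ 3 - 14 * X ^ 4 + 3 * X ^ 5 := by
  have hT : mk (fun n => (Polynomial.Chebyshev.T R n).eval 2) * (1 - 4 * X + X ^ 2) =
      1 - 2 * X := by
    have h := mk_eval_chebyshevT_mul (2 : R)
    simp only [map_mul, map_ofNat] at h
    linear_combination h
  have hadd : mk (fun n => (Polynomial.Chebyshev.T R n).eval 2 + 1) =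
      mk (fun n => (Polynomial.Chebyshev.T R n).eval 2) + mk 1 := by
    ext
    simp
  have hsum : mk (fun n => (Polynomial.Chebyshev.T R n).eval 2 + 1) *
      ((1 - X) * (1 - 4 * X + X ^ 2)) = (1 - 2 * X) * (1 - X) + (1 - 4 * X + X ^ 2) := by
    rw [hadd]
    linear_combination (1 - X) * hT + (1 - 4 * X + X ^ 2) * mk_one_mul_one_sub_eq_one R
  rw [mk_natCast_mul, X_mul_derivative_mul_sq hsum]
  simp only [map_add, map_sub, Derivation.leibniz, Derivation.leibniz_pow, Derivation.map_one_eq_zero,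
    derivative_X, derivative_ofNat, smul_eq_mul, nsmul_eq_mul]
  ring

end PowerSeries

@[simp, norm_cast]
theorem Polynomial.coe_ofNat {R : Type*} [Semiring R] (n : ℕ) [n.AtLeastTwo] :
    ((ofNat(n) : Polynomial R) : PowerSeries R) = ofNat(n) :=
  map_ofNat Polynomial.coeToPowerSeries.ringHom n

theorem Polynomial.eval_mul_eval_inv_eq_of_reciprocal {K : Type*} [Field K] {P Q : Polynomial K}
    {d : ℕ} (hP : ∀ x ≠ 0, x ^ d * P.eval x⁻¹ = P.eval x)
    (hQ : ∀ x ≠ 0, x ^ d * Q.eval x⁻¹ = Q.eval x) {x : K} (hx : x ≠ 0) :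
    P.eval x * Q.eval x⁻¹ = P.eval x⁻¹ * Q.eval x := by
  rw [← hP x hx, ← hQ x hx]
  ring

open Polynomial

theorem mobius_ladder_generating_function_rational
    (a : ℕ → ℤ) (ha : ∀ n, a n = n * ((Polynomial.Chebyshev.T ℤ n).eval 2 + 1)) :
    ∃ P Q : Polynomial ℤ, Q ≠ 0 ∧
      (PowerSeries.mk fun n => if n = 0 then 0 else a n) * (Q : PowerSeries ℤ) =
        (P : PowerSeries ℤ) ∧
      ∀ x : ℚ, x ≠ 0 →
        (P.map (Int.castRingHom ℚ)).eval x * (Q.map (Int.castRingHom ℚ)).eval x⁻¹ =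
          (P.map (Int.castRingHom ℚ)).eval x⁻¹ * (Q.map (Int.castRingHom ℚ)).eval x := by
  have hseq : (fun n => if n = 0 then 0 else a n) =
      fun n : ℕ => (n : ℤ) * ((Chebyshev.T ℤ n).eval 2 + 1) := by
    funext n
    split_ifs with hn <;> simp [hn, ha]
  refine ⟨3 * X - 14 * X ^ 2 + 26 * X ^ 3 - 14 * X ^ 4 + 3 * X ^ 5,
    ((1 - X) * (1 - 4 * X + X ^ 2)) ^ 2, fun h => by simpa using congrArg (eval 0) h, ?_, ?_⟩
  · rw [hseq]
    push_cast
    exact PowerSeries.mk_mobiusLadder_mul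
  · intro x hx
    apply eval_mul_eval_inv_eq_of_reciprocal (d := 6) _ _ hx <;>
    · intro y hy
      simp only [Polynomial.map_add, Polynomial.map_sub, Polynomial.map_mul, Polynomial.map_pow,
        Polynomial.map_one, Polynomial.map_ofNat, map_X, eval_add, eval_sub, eval_mul, eval_pow,
        eval_one, eval_ofNat, eval_X, inv_pow]
      field_simp
      ring
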